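/- Two-firm network externality: let f be continuously differentiable with f > 0, f' < 0, and y continuously differentiable with y' > 0. Suppose s₁* satisfies the private first-order condition f(s₁*)·y'(s₁*) = -f'(s₁*)·y(s₁*), and the social surplus is W(s₁, s₂) = f(s₁)·f(s₂)·(y(s₁) + y(s₂)). Then ∂W/∂s₁ evaluated at s₁ = s₁* equals f(s₂)·f'(s₁*)·y(s₂) < 0. -/
import Mathlib

/-- in the two-firm example, the marginal social welfare effect of
firm 1's specialization at its private optimum equals f(s₂)·f'(s₁*)·y(s₂) < 0. -/
theorem stmt8 (f y : ℝ → ℝ) (hfd : Differentiable ℝ f) (hyd : Differentiable ℝ y)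
    (hf : ∀ s, 0 < f s) (hf' : ∀ s, deriv f s < 0)
    (hy : ∀ s, 0 < y s) (hy' : ∀ s, 0 < deriv y s)
    (s1 s2 : ℝ)
    (hfoc : f s1 * deriv y s1 = -(deriv f s1) * y s1) :
    deriv (fun s => f s * f s2 * (y s + y s2)) s1 = f s2 * deriv f s1 * y s2 ∧
    f s2 * deriv f s1 * y s2 < 0 := by
  constructor
  · have h1 : HasDerivAt (fun s => f s * f s2 * (y s + y s2))
        ((deriv f s1 * f s2) * (y s1 + y s2) + (f s1 * f s2) * (deriv y s1)) s1 :=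
      (((hfd s1).hasDerivAt.mul_const (f s2)).mul
        ((hyd s1).hasDerivAt.add_const (y s2)))
    rw [h1.deriv]
    linear_combination f s2 * hfoc
  · have h := mul_pos (hf s2) (hy s2)
    have h2 := hf' s1
    nlinarith
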